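/- Every function f : {0,1}^k → ℚ that is of product type admits a normalized product-type expression. -/

import Mathlib

/-- `(-1)^a` for `a ∈ GF(2)`. -/
def signQ (a : ZMod 2) : ℚ := if a = 0 then 1 else -1

/-- The factor corresponding to one equality/disequality term `((i,j), lab)`:
`χ₌(x_i, x_j)` if `lab = true`, `χ≠(x_i, x_j)` if `lab = false`. -/
def edpFactor {k : ℕ} (t : (Fin k × Fin k) × Bool) (x : Fin k → ZMod 2) : ℚ :=
  if t.2 = true then (if x t.1.1 = x t.1.2 then 1 else 0)
  else (if x t.1.1 = x t.1.2 then 0 else 1)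

/-- The equality/disequality product determined by a list of terms `T`. -/
def gT {k : ℕ} (T : List ((Fin k × Fin k) × Bool)) (x : Fin k → ZMod 2) : ℚ :=
  (T.map (fun t => edpFactor t x)).prod

/-- `g` is a finite product of equality and disequality factors. -/
def IsEDP {k : ℕ} (g : (Fin k → ZMod 2) → ℚ) : Prop :=
  ∃ T : List ((Fin k × Fin k) × Bool), ∀ x, g x = gT T x

/-- `f` is of product type. -/
def IsProductType {k : ℕ} (f : (Fin k → ZMod 2) → ℚ) : Prop :=
  ∃ (U : Fin k → ZMod 2 → ℚ) (g : (Fin k → ZMod 2) → ℚ)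
    (s : (Fin k → ZMod 2) → ZMod 2),
    (∀ i b, 0 ≤ U i b) ∧ IsEDP g ∧
    ∀ x, f x = signQ (s x) * (∏ i, U i (x i)) * g x

/-- A function on `{0,1}^k` depends on variable `i`. -/
def DependsOnVar {k : ℕ} {β : Type} (h : (Fin k → ZMod 2) → β) (i : Fin k) : Prop :=
  ∃ x v, h (Function.update x i v) ≠ h x

/-- The function `s : {0,1}^k → GF(2)` has degree at most `d`, i.e. it is
represented by a polynomial over `GF(2)` of total degree at most `d`. -/
def DegLE {k : ℕ} (d : ℕ) (s : (Fin k → ZMod 2) → ZMod 2) : Prop :=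
  ∃ p : MvPolynomial (Fin k) (ZMod 2),
    p.totalDegree ≤ d ∧ ∀ x, MvPolynomial.eval x p = s x

/-- The degree of `s`: the minimal total degree of a representing polynomial
(equivalently, the total degree of the unique multilinear representative). -/
noncomputable def funDeg {k : ℕ} (s : (Fin k → ZMod 2) → ZMod 2) : ℕ :=
  sInf {d | DegLE d s}

/-- Variable `i` is determined in the expression `(s, U, T)`: exactly one term of
`T` involves `i`, `U i 0 = U i 1 = 1`, and `s` does not depend on `x_i`. -/
def Determined {k : ℕ} (U : Fin k → ZMod 2 → ℚ)
    (T : List ((Fin k × Fin k) × Bool)) (s : (Fin k → ZMod 2) → ZMod 2)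
    (i : Fin k) : Prop :=
  T.countP (fun t => decide (t.1.1 = i ∨ t.1.2 = i)) = 1 ∧
  U i 0 = 1 ∧ U i 1 = 1 ∧ ¬ DependsOnVar s i

/-!
The support of `f` is the set of points at which every `U i` is nonzero and every term of `T`
holds. Each unary zero pins one coordinate and each term fixes `x i + x j`, so, relative to a
point `x₀` of the support, every coordinate is either constant on the support or lies in a class
of coordinates whose displacement `x i - x₀ i` is the same at every point of the support. The
normalized expression keeps one representative per class, ties each other member to it by a
single equality/disequality term (so that member is determined), folds the unary weights of the
whole class into the representative, and pins the constant coordinates by unary weights vanishing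
off `x₀`. Precomposing a sign function with the affine retraction onto the support keeps it
valid and does not raise its degree over GF(2), so a valid sign of least degree can be chosen
that ignores the determined and pinned coordinates.
-/

open MvPolynomial

namespace ProductType

variable {k : ℕ}

lemma signQ_ne_zero (a : ZMod 2) : signQ a ≠ 0 := by
  unfold signQ; split_ifs <;> norm_num

lemma edpFactor_eq_zero_or_one (t : (Fin k × Fin k) × Bool) (x : Fin k → ZMod 2) :
    edpFactor t x = 0 ∨ edpFactor t x = 1 := by
  unfold edpFactor; split_ifs <;> simp

lemma edpFactor_eq_one_iff (t : (Fin k × Fin k) × Bool) (x : Fin k → ZMod 2) :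
    edpFactor t x = 1 ↔ (x t.1.1 = x t.1.2 ↔ t.2 = true) := by
  unfold edpFactor; cases t.2 <;> split_ifs <;> simp_all

lemma edpFactor_eq_one_iff_sub_eq {t : (Fin k × Fin k) × Bool} {x₀ : Fin k → ZMod 2}
    (ht : edpFactor t x₀ = 1) (y : Fin k → ZMod 2) :
    edpFactor t y = 1 ↔ y t.1.1 - x₀ t.1.1 = y t.1.2 - x₀ t.1.2 := by
  rw [edpFactor_eq_one_iff] at ht ⊢
  revert ht
  generalize y t.1.1 = a, y t.1.2 = b, x₀ t.1.1 = c, x₀ t.1.2 = d, t.2 = l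
  revert a b c d l
  decide

lemma gT_eq_one {T : List ((Fin k × Fin k) × Bool)} {x : Fin k → ZMod 2}
    (h : ∀ t ∈ T, edpFactor t x = 1) : gT T x = 1 :=
  List.prod_eq_one fun a ha => by
    obtain ⟨t, ht, rfl⟩ := List.mem_map.1 ha
    exact h t ht

lemma gT_eq_zero {T : List ((Fin k × Fin k) × Bool)} {x : Fin k → ZMod 2}
    {t : (Fin k × Fin k) × Bool} (ht : t ∈ T) (h : edpFactor t x ≠ 1) : gT T x = 0 :=
  List.prod_eq_zero (List.mem_map.2 ⟨t, ht, (edpFactor_eq_zero_or_one t x).resolve_right h⟩)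

lemma gT_ne_zero_iff {T : List ((Fin k × Fin k) × Bool)} {x : Fin k → ZMod 2} :
    gT T x ≠ 0 ↔ ∀ t ∈ T, edpFactor t x = 1 := by
  refine ⟨fun h t ht => ?_, fun h => by simp [gT_eq_one h]⟩
  by_contra ht'
  exact h (gT_eq_zero ht ht')

lemma not_dependsOnVar_gT {T : List ((Fin k × Fin k) × Bool)} {i : Fin k}
    (h : ∀ t ∈ T, t.1.1 ≠ i ∧ t.1.2 ≠ i) : ¬ DependsOnVar (gT T) i := by
  rintro ⟨x, v, hne⟩
  refine hne (congrArg List.prod (List.map_congr_left fun t ht => ?_))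
  simp only [edpFactor, Function.update_of_ne (h t ht).1, Function.update_of_ne (h t ht).2]

def IsSignFunction (f : (Fin k → ZMod 2) → ℚ) (U : Fin k → ZMod 2 → ℚ)
    (T : List ((Fin k × Fin k) × Bool)) (s : (Fin k → ZMod 2) → ZMod 2) : Prop :=
  ∀ x, f x = signQ (s x) * (∏ i, U i (x i)) * gT T x

def IsCutOutBy (f : (Fin k → ZMod 2) → ℚ) (U : Fin k → ZMod 2 → ℚ)
    (T : List ((Fin k × Fin k) × Bool)) : Prop :=
  ∀ x, f x ≠ 0 ↔ (∀ i, U i (x i) ≠ 0) ∧ ∀ t ∈ T, edpFactor t x = 1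

lemma IsSignFunction.isCutOutBy {f : (Fin k → ZMod 2) → ℚ} {U : Fin k → ZMod 2 → ℚ}
    {T : List ((Fin k × Fin k) × Bool)} {s : (Fin k → ZMod 2) → ZMod 2}
    (h : IsSignFunction f U T s) : IsCutOutBy f U T := fun x => by
  rw [h x, mul_ne_zero_iff, mul_ne_zero_iff, Finset.prod_ne_zero_iff, gT_ne_zero_iff]
  simp [signQ_ne_zero]

lemma IsSignFunction.pos_of_forall_eq_zero {f : (Fin k → ZMod 2) → ℚ}
    {U : Fin k → ZMod 2 → ℚ} {T : List ((Fin k × Fin k) × Bool)}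
    {s : (Fin k → ZMod 2) → ZMod 2} (h : IsSignFunction f U T s) (hf : ∀ x, f x = 0) :
    0 < k := by
  rcases Nat.eq_zero_or_pos k with rfl | hk
  · have hT : T = [] := List.eq_nil_iff_forall_not_mem.2 fun t _ => t.1.1.elim0
    exact absurd (by simpa [hf, hT, gT] using h Fin.elim0) (signQ_ne_zero _).symm
  · exact hk

lemma exists_degLE (s : (Fin k → ZMod 2) → ZMod 2) : ∃ d, DegLE d s := by
  obtain ⟨p, -, hp⟩ := Submodule.mem_map.1
    ((map_restrict_dom_evalₗ (K := ZMod 2) (σ := Fin k)).symm ▸ Submodule.mem_top (x := s))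
  exact ⟨p.totalDegree, p, le_rfl, fun x => congrFun hp x⟩

lemma degLE_funDeg (s : (Fin k → ZMod 2) → ZMod 2) : DegLE (funDeg s) s :=
  Nat.sInf_mem (exists_degLE s)

lemma totalDegree_bind₁_le {σ τ R : Type*} [CommSemiring R] (g : σ → MvPolynomial τ R)
    (hg : ∀ i, (g i).totalDegree ≤ 1) (p : MvPolynomial σ R) :
    (bind₁ g p).totalDegree ≤ p.totalDegree := by
  conv_lhs => rw [p.as_sum, map_sum]
  refine totalDegree_finsetSum_le fun u hu => ?_
  rw [bind₁_monomial]
  calc (C (p.coeff u) * ∏ i ∈ u.support, g i ^ u i).totalDegree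
      ≤ ∑ i ∈ u.support, (g i ^ u i).totalDegree := by
        refine (totalDegree_mul _ _).trans ?_
        rw [totalDegree_C, zero_add]
        exact totalDegree_finsetProd _ _
    _ ≤ ∑ i ∈ u.support, u i :=
        Finset.sum_le_sum fun i _ =>
          (totalDegree_pow _ _).trans (mul_le_of_le_one_right (Nat.zero_le _) (hg i))
    _ ≤ p.totalDegree := le_totalDegree hu

lemma DegLE.comp_affine {d : ℕ} {s : (Fin k → ZMod 2) → ZMod 2} (hs : DegLE d s)
    (g : Fin k → MvPolynomial (Fin k) (ZMod 2)) (hg : ∀ i, (g i).totalDegree ≤ 1) :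
    DegLE d fun x => s fun i => eval x (g i) := by
  obtain ⟨p, hp, hev⟩ := hs
  refine ⟨bind₁ g p, (totalDegree_bind₁_le g hg p).trans hp, fun x => ?_⟩
  show eval x (bind₁ g p) = s _
  rw [← hev]
  exact eval₂Hom_bind₁ _ _ _ _

section Support

variable (f : (Fin k → ZMod 2) → ℚ) (x₀ : Fin k → ZMod 2)

def IsFree (i : Fin k) : Prop := ∃ x, f x ≠ 0 ∧ x i ≠ x₀ i

instance : DecidablePred (IsFree f x₀) := fun _ => by unfold IsFree; infer_instance

def supportDisp (i : Fin k) (x : {x // f x ≠ 0}) : ZMod 2 := x.1 i - x₀ i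

noncomputable def classRep (i : Fin k) : Fin k :=
  (⟦i⟧ : Quotient (Setoid.ker (supportDisp f x₀))).out

noncomputable def retract (x : Fin k → ZMod 2) : Fin k → ZMod 2 := fun i =>
  if IsFree f x₀ i then x (classRep f x₀ i) + (x₀ i - x₀ (classRep f x₀ i)) else x₀ i

variable {f x₀}

lemma supportDisp_classRep (i : Fin k) :
    supportDisp f x₀ (classRep f x₀ i) = supportDisp f x₀ i :=
  Setoid.ker_apply_mk_out i

lemma classRep_eq_classRep {i j : Fin k} (h : supportDisp f x₀ i = supportDisp f x₀ j) :
    classRep f x₀ i = classRep f x₀ j :=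
  congrArg Quotient.out (Quotient.sound (Setoid.ker_def.2 h))

lemma classRep_classRep (i : Fin k) : classRep f x₀ (classRep f x₀ i) = classRep f x₀ i :=
  classRep_eq_classRep (supportDisp_classRep i)

lemma sub_classRep {x : Fin k → ZMod 2} (hx : f x ≠ 0) (i : Fin k) :
    x (classRep f x₀ i) - x₀ (classRep f x₀ i) = x i - x₀ i :=
  congrFun (supportDisp_classRep i) ⟨x, hx⟩

lemma IsFree.of_supportDisp_eq {i j : Fin k} (hi : IsFree f x₀ i)
    (h : supportDisp f x₀ i = supportDisp f x₀ j) : IsFree f x₀ j := by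
  obtain ⟨x, hx, hxi⟩ := hi
  refine ⟨x, hx, fun hxj => hxi ?_⟩
  simpa [supportDisp, hxj, sub_eq_zero] using congrFun h ⟨x, hx⟩

lemma IsFree.classRep {i : Fin k} (hi : IsFree f x₀ i) : IsFree f x₀ (classRep f x₀ i) :=
  hi.of_supportDisp_eq (supportDisp_classRep i).symm

lemma eq_of_not_isFree {i : Fin k} (hi : ¬ IsFree f x₀ i) {x : Fin k → ZMod 2}
    (hx : f x ≠ 0) : x i = x₀ i :=
  not_not.1 fun h => hi ⟨x, hx, h⟩

lemma retract_eq_self {x : Fin k → ZMod 2} (hx : f x ≠ 0) : retract f x₀ x = x := by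
  funext i
  unfold retract
  split_ifs with hi
  · linear_combination sub_classRep hx i
  · exact (eq_of_not_isFree hi hx).symm

lemma retract_update {i : Fin k} (h : ¬ (IsFree f x₀ i ∧ classRep f x₀ i = i))
    (x : Fin k → ZMod 2) (v : ZMod 2) : retract f x₀ (Function.update x i v) = retract f x₀ x := by
  funext j
  unfold retract
  split_ifs with hj
  · rw [Function.update_of_ne]
    rintro rfl
    exact h ⟨hj.classRep, classRep_classRep j⟩
  · rfl

lemma not_dependsOnVar_comp_retract {i : Fin k} (h : ¬ (IsFree f x₀ i ∧ classRep f x₀ i = i))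
    (s : (Fin k → ZMod 2) → ZMod 2) : ¬ DependsOnVar (fun x => s (retract f x₀ x)) i :=
  fun ⟨x, v, hne⟩ => hne (congrArg s (retract_update h x v))

lemma funDeg_comp_retract_le (s : (Fin k → ZMod 2) → ZMod 2) :
    funDeg (fun x => s (retract f x₀ x)) ≤ funDeg s := by
  let g i : MvPolynomial (Fin k) (ZMod 2) :=
    if IsFree f x₀ i then X (classRep f x₀ i) + C (x₀ i - x₀ (classRep f x₀ i)) else C (x₀ i)
  have hg i : (g i).totalDegree ≤ 1 := by
    unfold g
    split_ifs
    · exact (totalDegree_add _ _).trans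
        (max_le (totalDegree_X _).le ((totalDegree_C _).trans_le zero_le_one))
    · exact (totalDegree_C _).trans_le zero_le_one
  have heval x : (fun i => eval x (g i)) = retract f x₀ x := by
    funext i
    unfold g retract
    split_ifs <;> simp
  refine Nat.sInf_le (Set.mem_ofPred.2 ?_)
  simpa only [heval] using DegLE.comp_affine (degLE_funDeg s) g hg

variable {U : Fin k → ZMod 2 → ℚ} {T : List ((Fin k × Fin k) × Bool)}

lemma ne_zero_of_isFree
    (hsupp : IsCutOutBy f U T)
    (hx₀ : f x₀ ≠ 0) {i : Fin k} (hi : IsFree f x₀ i) (b : ZMod 2) : U i b ≠ 0 := by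
  obtain ⟨y, hy, hyi⟩ := hi
  have hb : b = x₀ i ∨ b = y i := by
    revert hyi; generalize y i = c, x₀ i = d; revert b c d; decide
  rcases hb with rfl | rfl
  · exact ((hsupp x₀).1 hx₀).1 i
  · exact ((hsupp y).1 hy).1 i

lemma ne_zero_of_retract_eq_self
    (hsupp : IsCutOutBy f U T)
    (hx₀ : f x₀ ≠ 0) {x : Fin k → ZMod 2} (h : retract f x₀ x = x) : f x ≠ 0 := by
  refine (hsupp x).2 ⟨fun i => ?_, fun t ht => ?_⟩
  · by_cases hi : IsFree f x₀ i
    · exact ne_zero_of_isFree hsupp hx₀ hi _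
    · have hxi : x i = x₀ i := by rw [← h]; simp [retract, hi]
      rw [hxi]
      exact ((hsupp x₀).1 hx₀).1 i
  · have ht₀ := ((hsupp x₀).1 hx₀).2 t ht
    have hdisp : supportDisp f x₀ t.1.1 = supportDisp f x₀ t.1.2 :=
      funext fun y => (edpFactor_eq_one_iff_sub_eq ht₀ y.1).1 (((hsupp y.1).1 y.2).2 t ht)
    rw [edpFactor_eq_one_iff_sub_eq ht₀, ← h]
    unfold retract
    by_cases ha : IsFree f x₀ t.1.1
    · rw [if_pos ha, if_pos (ha.of_supportDisp_eq hdisp), classRep_eq_classRep hdisp]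
      ring
    · have hb : ¬ IsFree f x₀ t.1.2 := fun hb => ha (hb.of_supportDisp_eq hdisp.symm)
      simp [ha, hb]

end Support

section Normalization

variable (f : (Fin k → ZMod 2) → ℚ) (x₀ : Fin k → ZMod 2)

noncomputable def normUnary (U : Fin k → ZMod 2 → ℚ) (i : Fin k) (b : ZMod 2) : ℚ :=
  if IsFree f x₀ i then
    ∏ j with IsFree f x₀ j ∧ classRep f x₀ j = i, U j (b + (x₀ j - x₀ i))
  else if b = x₀ i then U i b else 0

noncomputable def normTerm (i : Fin k) : (Fin k × Fin k) × Bool :=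
  ((classRep f x₀ i, i), decide (x₀ (classRep f x₀ i) = x₀ i))

noncomputable def normTerms : List ((Fin k × Fin k) × Bool) :=
  ((List.finRange k).filter fun i => IsFree f x₀ i ∧ classRep f x₀ i ≠ i).map (normTerm f x₀)

variable {f x₀} {U : Fin k → ZMod 2 → ℚ} {T : List ((Fin k × Fin k) × Bool)}

lemma mem_normTerms {t : (Fin k × Fin k) × Bool} :
    t ∈ normTerms f x₀ ↔ ∃ i, IsFree f x₀ i ∧ classRep f x₀ i ≠ i ∧ normTerm f x₀ i = t := by
  simp [normTerms, and_assoc]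

lemma edpFactor_normTerm_eq_one_iff (x : Fin k → ZMod 2) (i : Fin k) :
    edpFactor (normTerm f x₀ i) x = 1 ↔
      x i = x (classRep f x₀ i) + (x₀ i - x₀ (classRep f x₀ i)) := by
  simp only [edpFactor_eq_one_iff, normTerm, decide_eq_true_iff]
  generalize x i = a, x (classRep f x₀ i) = b, x₀ i = c, x₀ (classRep f x₀ i) = d
  revert a b c d
  decide

lemma countP_normTerms {i : Fin k} (hi : IsFree f x₀ i) (hr : classRep f x₀ i ≠ i) :
    (normTerms f x₀).countP (fun t => decide (t.1.1 = i ∨ t.1.2 = i)) = 1 := by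
  have hmem : i ∈ (List.finRange k).filter fun j => IsFree f x₀ j ∧ classRep f x₀ j ≠ j := by
    simp [hi, hr]
  rw [normTerms, List.countP_map,
    ← List.count_eq_one_of_mem ((List.nodup_finRange k).filter _) hmem, List.count_eq_countP]
  refine List.countP_congr fun j hj => ?_
  have hrj : classRep f x₀ j ≠ i := fun h => hr (h ▸ classRep_classRep j)
  simp only [Function.comp_apply, normTerm, decide_eq_true_eq, hrj, false_or, beq_iff_eq]

lemma normUnary_nonneg (hU : ∀ i b, 0 ≤ U i b) (i : Fin k)
    (b : ZMod 2) : 0 ≤ normUnary f x₀ U i b := by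
  unfold normUnary
  split_ifs
  exacts [Finset.prod_nonneg fun j _ => hU j _, hU i b, le_rfl]

lemma normUnary_eq_one {i : Fin k} (hi : IsFree f x₀ i)
    (hr : classRep f x₀ i ≠ i) (b : ZMod 2) : normUnary f x₀ U i b = 1 := by
  rw [normUnary, if_pos hi]
  refine Finset.prod_eq_one fun j hj => absurd ?_ hr
  obtain ⟨-, rfl⟩ := (Finset.mem_filter.1 hj).2
  exact classRep_classRep j

lemma prod_normUnary {x : Fin k → ZMod 2} (hx : f x ≠ 0) :
    ∏ i, normUnary f x₀ U i (x i) = ∏ i, U i (x i) := by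
  rw [← Finset.prod_filter_mul_prod_filter_not Finset.univ (IsFree f x₀),
    ← Finset.prod_filter_mul_prod_filter_not Finset.univ (IsFree f x₀) (fun i => U i (x i))]
  congr 1
  · calc ∏ i with IsFree f x₀ i, normUnary f x₀ U i (x i)
        = ∏ i with IsFree f x₀ i, ∏ j with IsFree f x₀ j ∧ classRep f x₀ j = i, U j (x j) := by
          refine Finset.prod_congr rfl fun i hi => ?_
          rw [normUnary, if_pos (Finset.mem_filter.1 hi).2]
          refine Finset.prod_congr rfl fun j hj => ?_
          obtain ⟨-, rfl⟩ := (Finset.mem_filter.1 hj).2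
          congr 1
          linear_combination sub_classRep hx j
      _ = ∏ j with IsFree f x₀ j, U j (x j) := by
          simp_rw [← Finset.filter_filter]
          exact Finset.prod_fiberwise_of_maps_to
            (fun j hj => Finset.mem_filter.2
              ⟨Finset.mem_univ _, (Finset.mem_filter.1 hj).2.classRep⟩) _
  · refine Finset.prod_congr rfl fun i hi => ?_
    have hxi := eq_of_not_isFree (Finset.mem_filter.1 hi).2 hx
    rw [normUnary, if_neg (Finset.mem_filter.1 hi).2, if_pos hxi]

lemma gT_normTerms_of_ne_zero {x : Fin k → ZMod 2} (hx : f x ≠ 0) : gT (normTerms f x₀) x = 1 :=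
  gT_eq_one fun t ht => by
    obtain ⟨i, hi, -, rfl⟩ := mem_normTerms.1 ht
    rw [edpFactor_normTerm_eq_one_iff]
    simpa [retract, hi] using (congrFun (retract_eq_self (x₀ := x₀) hx) i).symm

lemma not_dependsOnVar_gT_normTerms {i : Fin k} (hi : ¬ IsFree f x₀ i) :
    ¬ DependsOnVar (gT (normTerms f x₀)) i := by
  refine not_dependsOnVar_gT fun t ht => ?_
  obtain ⟨j, hj, -, rfl⟩ := mem_normTerms.1 ht
  exact ⟨fun h => hi (h ▸ hj.classRep), fun h => hi (h ▸ hj)⟩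

lemma normUnary_ne_zero
    (hsupp : IsCutOutBy f U T)
    (hx₀ : f x₀ ≠ 0) {i : Fin k} (hi : IsFree f x₀ i) (b : ZMod 2) : normUnary f x₀ U i b ≠ 0 := by
  rw [normUnary, if_pos hi]
  exact Finset.prod_ne_zero_iff.2 fun j hj =>
    ne_zero_of_isFree hsupp hx₀ (Finset.mem_filter.1 hj).2.1 _

lemma prod_normUnary_mul_gT_normTerms_eq_zero
    (hsupp : IsCutOutBy f U T)
    (hx₀ : f x₀ ≠ 0) {x : Fin k → ZMod 2} (hx : f x = 0) :
    (∏ i, normUnary f x₀ U i (x i)) * gT (normTerms f x₀) x = 0 := by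
  obtain ⟨i, hi⟩ : ∃ i, retract f x₀ x i ≠ x i := by
    by_contra! h
    exact ne_zero_of_retract_eq_self hsupp hx₀ (funext h) hx
  unfold retract at hi
  split_ifs at hi with hfree
  · have hr : classRep f x₀ i ≠ i := fun hr => hi (by rw [hr, sub_self, add_zero])
    rw [gT_eq_zero (mem_normTerms.2 ⟨i, hfree, hr, rfl⟩)
      (mt (edpFactor_normTerm_eq_one_iff x i).1 (Ne.symm hi)), mul_zero]
  · rw [Finset.prod_eq_zero (Finset.mem_univ i)
      (by rw [normUnary, if_neg hfree, if_neg (Ne.symm hi)]), zero_mul]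

lemma isSignFunction_normalized_iff
    (hsupp : IsCutOutBy f U T)
    (hx₀ : f x₀ ≠ 0) (s : (Fin k → ZMod 2) → ZMod 2) :
    IsSignFunction f (normUnary f x₀ U) (normTerms f x₀) s ↔
      ∀ x, f x ≠ 0 → f x = signQ (s x) * ∏ i, U i (x i) := by
  refine ⟨fun h x hx => ?_, fun h x => ?_⟩
  · rw [h x, gT_normTerms_of_ne_zero hx, mul_one, prod_normUnary hx]
  · by_cases hx : f x = 0
    · rw [hx, mul_assoc, prod_normUnary_mul_gT_normTerms_eq_zero hsupp hx₀ hx, mul_zero]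
    · rw [gT_normTerms_of_ne_zero hx, mul_one, prod_normUnary hx, h x hx]

end Normalization

def IsNormalizedExpression (f : (Fin k → ZMod 2) → ℚ) (U : Fin k → ZMod 2 → ℚ)
    (T : List ((Fin k × Fin k) × Bool)) (s : (Fin k → ZMod 2) → ZMod 2) : Prop :=
  (∀ i b, 0 ≤ U i b) ∧
  (∀ t ∈ T, t.1.1 ≠ t.1.2) ∧
  IsSignFunction f U T s ∧
  (∀ t ∈ T, Determined U T s t.1.1 ∨ Determined U T s t.1.2) ∧
  (∀ i, (U i 0 = 0 ∨ U i 1 = 0) → ¬ DependsOnVar (gT T) i ∧ ¬ DependsOnVar s i) ∧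
  (∀ s', IsSignFunction f U T s' → funDeg s ≤ funDeg s')

lemma isNormalizedExpression_zero (hk : 0 < k) {f : (Fin k → ZMod 2) → ℚ}
    (hf : ∀ x, f x = 0) : IsNormalizedExpression f (fun _ _ => 0) [] (fun _ => 0) := by
  refine ⟨fun _ _ => le_rfl, by simp, fun x => ?_, by simp,
    fun _ _ => ⟨fun ⟨_, _, h⟩ => h rfl, fun ⟨_, _, h⟩ => h rfl⟩,
    fun _ _ => (Nat.sInf_le (show DegLE 0 fun _ => (0 : ZMod 2) from ⟨0, by simp, by simp⟩)).trans
      (Nat.zero_le _)⟩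
  rw [hf, Finset.prod_eq_zero (Finset.mem_univ ⟨0, hk⟩) rfl, mul_zero, zero_mul]

lemma exists_isNormalizedExpression_of_ne_zero {f : (Fin k → ZMod 2) → ℚ}
    {U : Fin k → ZMod 2 → ℚ} {T : List ((Fin k × Fin k) × Bool)}
    {s : (Fin k → ZMod 2) → ZMod 2} (hU : ∀ i b, 0 ≤ U i b) (hf : IsSignFunction f U T s)
    {x₀ : Fin k → ZMod 2} (hx₀ : f x₀ ≠ 0) :
    ∃ U' T' s', IsNormalizedExpression f U' T' s' := by
  have hsupp := hf.isCutOutBy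
  have hvalid := isSignFunction_normalized_iff hsupp hx₀
  let signs := {s' | IsSignFunction f (normUnary f x₀ U) (normTerms f x₀) s'}
  have hs : s ∈ signs := (hvalid s).2 fun x hx => by
    rw [hf x, gT_eq_one ((hsupp x).1 hx).2, mul_one]
  set s₀ := Function.argminOn funDeg signs ⟨s, hs⟩
  have hs₀ : s₀ ∈ signs := Function.argminOn_mem funDeg signs _
  refine ⟨normUnary f x₀ U, normTerms f x₀, fun x => s₀ (retract f x₀ x),
    normUnary_nonneg hU, fun t ht => ?_, (hvalid _).2 fun x hx => ?_, fun t ht => ?_,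
    fun i hi => ?_, fun s' hs' => (funDeg_comp_retract_le s₀).trans
      (Function.argminOn_le funDeg signs hs')⟩
  · obtain ⟨i, -, hr, rfl⟩ := mem_normTerms.1 ht
    exact hr
  · rw [retract_eq_self hx]
    exact (hvalid s₀).1 hs₀ x hx
  · obtain ⟨i, hi, hr, rfl⟩ := mem_normTerms.1 ht
    exact Or.inr ⟨countP_normTerms hi hr, normUnary_eq_one hi hr 0, normUnary_eq_one hi hr 1,
      not_dependsOnVar_comp_retract (fun h => hr h.2) s₀⟩
  · have hi' : ¬ IsFree f x₀ i := fun hfree =>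
      hi.elim (normUnary_ne_zero hsupp hx₀ hfree 0) (normUnary_ne_zero hsupp hx₀ hfree 1)
    exact ⟨not_dependsOnVar_gT_normTerms hi', not_dependsOnVar_comp_retract (fun h => hi' h.1) s₀⟩

end ProductType

open ProductType in
/-- Every function of product type admits a normalized product-type expression. -/
theorem productType_normalized_expression {k : ℕ} (f : (Fin k → ZMod 2) → ℚ)
    (hf : IsProductType f) :
    ∃ (U : Fin k → ZMod 2 → ℚ) (T : List ((Fin k × Fin k) × Bool))
      (s : (Fin k → ZMod 2) → ZMod 2),
      -- it is a product-type expression for f ...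
      (∀ i b, 0 ≤ U i b) ∧
      (∀ t ∈ T, t.1.1 ≠ t.1.2) ∧
      (∀ x, f x = signQ (s x) * (∏ i, U i (x i)) * gT T x) ∧
      -- (i) every term of T involves a determined variable
      (∀ t ∈ T, Determined U T s t.1.1 ∨ Determined U T s t.1.2) ∧
      -- (ii) if U_i vanishes somewhere then neither g_T nor s depends on x_i
      (∀ i, (U i 0 = 0 ∨ U i 1 = 0) →
        ¬ DependsOnVar (gT T) i ∧ ¬ DependsOnVar s i) ∧
      -- (iii) s has minimal degree among all sign functions for this expression
      (∀ s' : (Fin k → ZMod 2) → ZMod 2,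
        (∀ x, f x = signQ (s' x) * (∏ i, U i (x i)) * gT T x) →
        funDeg s ≤ funDeg s') := by
  obtain ⟨U, g, s, hU, ⟨T, hgT⟩, hrepr⟩ := hf
  have hsign : IsSignFunction f U T s := fun x => by rw [hrepr x, hgT x]
  by_cases hzero : ∀ x, f x = 0
  · exact ⟨_, _, _, isNormalizedExpression_zero (hsign.pos_of_forall_eq_zero hzero) hzero⟩
  · obtain ⟨x₀, hx₀⟩ := not_forall.1 hzero
    exact exists_isNormalizedExpression_of_ne_zero hU hsign hx₀
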